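/- Define f_N(x) = |sin(Nπx/2)/sin(πx/2)| for 0 < x < 2/N, with f_N(0) = N. Then f_N is strictly decreasing on the interval [0, 2/N): for 0 ≤ x_1 < x_2 < 2/N one has f_N(x_1) > f_N(x_2). -/

import Mathlib

open scoped Real

/-- numerator of derivative of sin(Ax)/sin(Bx) times sin(Bx)^2 -/
private lemma aux_g_neg (A B L : ℝ) (hB : 0 < B) (hBA : B < A) (hAL : A * L ≤ π) :
    ∀ x ∈ Set.Ioo (0:ℝ) L,
      A * Real.cos (A*x) * Real.sin (B*x) - B * Real.sin (A*x) * Real.cos (B*x) < 0 := by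
  have hA : 0 < A := hB.trans hBA
  set g : ℝ → ℝ := fun x => A * Real.cos (A*x) * Real.sin (B*x) - B * Real.sin (A*x) * Real.cos (B*x) with hg
  have hderiv : ∀ x : ℝ, HasDerivAt g ((B^2 - A^2) * Real.sin (A*x) * Real.sin (B*x)) x := by
    intro x
    have hAx : HasDerivAt (fun x : ℝ => A * x) A x := by
      simpa using (hasDerivAt_id x).const_mul A
    have hBx : HasDerivAt (fun x : ℝ => B * x) B x := by
      simpa using (hasDerivAt_id x).const_mul B
    have h1 := ((hAx.cos.const_mul A).mul hBx.sin)
    have h2 := ((hAx.sin.const_mul B).mul hBx.cos)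
    have := h1.sub h2
    exact this.congr_deriv (by ring)
  have hanti : StrictAntiOn g (Set.Icc 0 L) := by
    apply strictAntiOn_of_deriv_neg (convex_Icc 0 L)
    · exact Continuous.continuousOn (by fun_prop)
    · intro x hx
      rw [interior_Icc] at hx
      rw [(hderiv x).deriv]
      obtain ⟨hx0, hxL⟩ := hx
      have hAx : A * x < π := lt_of_lt_of_le (by nlinarith) hAL
      have hsA : 0 < Real.sin (A*x) := Real.sin_pos_of_pos_of_lt_pi (mul_pos hA hx0) hAx
      have hBxpi : B * x < π := lt_of_lt_of_le (by nlinarith) hAx.le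
      have hsB : 0 < Real.sin (B*x) := Real.sin_pos_of_pos_of_lt_pi (mul_pos hB hx0) hBxpi
      have hsq : B^2 < A^2 := by nlinarith
      nlinarith [mul_pos hsA hsB]
  intro x hx
  have h0 : g 0 = 0 := by simp [hg]
  have h1 := hanti (Set.mem_Icc.2 ⟨le_refl 0, by linarith [hx.1, hx.2]⟩)
    (Set.mem_Icc.2 ⟨hx.1.le, hx.2.le⟩) hx.1
  rw [h0] at h1
  exact h1

private lemma aux_anti (A B L : ℝ) (hB : 0 < B) (hBA : B < A) (hAL : A * L ≤ π) :
    StrictAntiOn (fun x => Real.sin (A*x) / Real.sin (B*x)) (Set.Ioo (0:ℝ) L) := by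
  have hA : 0 < A := hB.trans hBA
  have hsinB : ∀ x ∈ Set.Ioo (0:ℝ) L, 0 < Real.sin (B*x) := by
    intro x hx
    have hAx : A * x < π := lt_of_lt_of_le (by nlinarith [hx.1, hx.2]) hAL
    have : B * x < π := lt_of_lt_of_le (by nlinarith [hx.1]) hAx.le
    exact Real.sin_pos_of_pos_of_lt_pi (mul_pos hB hx.1) this
  apply strictAntiOn_of_deriv_neg (convex_Ioo 0 L)
  · apply ContinuousOn.div
    · exact Continuous.continuousOn (by fun_prop)
    · exact Continuous.continuousOn (by fun_prop)
    · intro x hx; exact (hsinB x hx).ne'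
  · intro x hx
    rw [interior_Ioo] at hx
    have hAx : HasDerivAt (fun x : ℝ => A * x) A x := by
      simpa using (hasDerivAt_id x).const_mul A
    have hBx : HasDerivAt (fun x : ℝ => B * x) B x := by
      simpa using (hasDerivAt_id x).const_mul B
    have hne : Real.sin (B*x) ≠ 0 := (hsinB x hx).ne'
    have hd := (hAx.sin).div (hBx.sin) hne
    rw [show deriv (fun x => Real.sin (A * x) / Real.sin (B * x)) x = _ from hd.deriv]
    have hnum := aux_g_neg A B L hB hBA hAL x hx
    have hden : 0 < Real.sin (B*x)^2 := by positivity
    apply div_neg_of_neg_of_pos _ hden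
    nlinarith [hnum]

private lemma aux_sin_lt (c t : ℝ) (hc : 1 < c) (ht : 0 < t) (hct : c * t ≤ π) :
    Real.sin (c * t) < c * Real.sin t := by
  set h : ℝ → ℝ := fun y => c * Real.sin y - Real.sin (c * y) with hh
  have hmono : StrictMonoOn h (Set.Icc 0 t) := by
    apply strictMonoOn_of_deriv_pos (convex_Icc 0 t)
    · exact Continuous.continuousOn (by fun_prop)
    · intro y hy
      rw [interior_Icc] at hy
      have hcy : HasDerivAt (fun y : ℝ => c * y) c y := by
        simpa using (hasDerivAt_id y).const_mul c
      have hd := ((Real.hasDerivAt_sin y).const_mul c).sub hcy.sin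
      rw [show deriv h y = _ from hd.deriv]
      have h1 : Real.cos (c * y) < Real.cos y := by
        apply Real.cos_lt_cos_of_nonneg_of_le_pi hy.1.le
        · nlinarith [hy.2]
        · nlinarith [hy.1]
      nlinarith
  have := hmono (Set.mem_Icc.2 ⟨le_refl 0, ht.le⟩) (Set.mem_Icc.2 ⟨ht.le, le_refl t⟩) ht
  simp [hh] at this
  linarith

/-- The array-factor magnitude of an `N`-element half-wave-spaced ULA,
extended by continuity at `x = 0` with value `N`. -/
noncomputable def ulaFactor (N : ℕ) (x : ℝ) : ℝ :=
  if x = 0 then N else |Real.sin (N * π * x / 2) / Real.sin (π * x / 2)|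

/-- The ULA array factor is strictly decreasing on the main-lobe half-width `[0, 2/N)`. -/
theorem ulaFactor_strictAnti_mainlobe (N : ℕ) (hN : 2 ≤ N) (x1 x2 : ℝ)
    (h0 : 0 ≤ x1) (h12 : x1 < x2) (h2 : x2 < 2 / N) :
    ulaFactor N x2 < ulaFactor N x1 := by
  have hNR : (2:ℝ) ≤ N := by exact_mod_cast hN
  have hN0 : (0:ℝ) < N := by linarith
  have hπ := Real.pi_pos
  set A : ℝ := N * π / 2 with hA
  set B : ℝ := π / 2 with hB
  have hBpos : 0 < B := by positivity
  have hBA : B < A := by rw [hA, hB]; nlinarith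
  have hAL : A * (2 / N) ≤ π := le_of_eq (by field_simp [hA]; rw [hA]; ring)
  have hx2pos : 0 < x2 := lt_of_le_of_lt h0 h12
  -- positivity of sines for x ∈ (0, 2/N)
  have hsin : ∀ x : ℝ, 0 < x → x < 2 / N →
      0 < Real.sin (A * x) ∧ 0 < Real.sin (B * x) := by
    intro x hx hxL
    have hAx : A * x < π := lt_of_lt_of_le (by nlinarith) hAL
    have hBx : B * x < π := lt_of_lt_of_le (by nlinarith) hAx.le
    exact ⟨Real.sin_pos_of_pos_of_lt_pi (by positivity) hAx,
      Real.sin_pos_of_pos_of_lt_pi (by positivity) hBx⟩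
  obtain ⟨hsA2, hsB2⟩ := hsin x2 hx2pos h2
  have harg : ∀ x : ℝ, (N:ℝ) * π * x / 2 = A * x := by intro x; rw [hA]; ring
  have hargB : ∀ x : ℝ, π * x / 2 = B * x := by intro x; rw [hB]; ring
  have hval : ∀ x : ℝ, 0 < x → x < 2/N →
      ulaFactor N x = Real.sin (A * x) / Real.sin (B * x) := by
    intro x hx hxL
    obtain ⟨hsA, hsB⟩ := hsin x hx hxL
    rw [ulaFactor, if_neg hx.ne', harg, hargB, abs_of_pos (div_pos hsA hsB)]
  rcases eq_or_lt_of_le h0 with h0' | h0'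
  · -- x1 = 0
    rw [← h0']
    have h00 : ulaFactor N 0 = N := by simp [ulaFactor]
    rw [h00, hval x2 hx2pos h2]
    rw [div_lt_iff₀ hsB2]
    have : A * x2 = (N:ℝ) * (B * x2) := by rw [hA, hB]; ring
    rw [this]
    have := aux_sin_lt N (B * x2) (by exact_mod_cast by linarith : (1:ℝ) < N)
      (by positivity) (by nlinarith [hAL])
    linarith [this]
  · rw [hval x1 h0' (h12.trans h2), hval x2 hx2pos h2]
    exact aux_anti A B (2/N) hBpos hBA hAL ⟨h0', h12.trans h2⟩ ⟨hx2pos, h2⟩ h12
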